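/- Let W have the chi-squared density f_W(w) = w^{q/2-1} e^{-w/2} / (2^{q/2} Γ(q/2)) on (0,∞) and let Z have the truncated chi-squared density f_Z(z) = z^{p/2-1} e^{-z/2} / (2^{p/2} (1 - Φ_G(pλ²/2)) Γ(p/2)) on [pλ², ∞), with W and Z independent. Then S = W + Z has density f_S(s) = f_C(s) · (1 - Φ_B(pλ²/s; p/2, q/2)) / (1 - Φ_G(pλ²/2)) for s > pλ², where f_C is the chi-squared density with p + q degrees of freedom and Φ_B(·; a, b) is the CDF of the Beta(a, b) distribution. -/

import Mathlib

open MeasureTheory ProbabilityTheory Real Filter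

noncomputable def stdPDF (x : ℝ) : ℝ := (Real.sqrt (2 * Real.pi))⁻¹ * Real.exp (-x ^ 2 / 2)

noncomputable def stdCDF (x : ℝ) : ℝ := ∫ t in Set.Iic x, stdPDF t

noncomputable def gammaCDF (s x : ℝ) : ℝ :=
  ∫ t in Set.Ioc 0 x, t ^ (s - 1) * Real.exp (-t) / Real.Gamma s
noncomputable def chiSqPDF (k c : ℝ) : ℝ :=
  c ^ (k / 2 - 1) * Real.exp (-c / 2) / (2 ^ (k / 2) * Real.Gamma (k / 2))

noncomputable def truncChiSqPDF (p lam z : ℝ) : ℝ :=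
  z ^ (p / 2 - 1) * Real.exp (-z / 2)
    / (2 ^ (p / 2) * (1 - gammaCDF (p / 2) (p * lam ^ 2 / 2)) * Real.Gamma (p / 2))

noncomputable def betaCDF (a b x : ℝ) : ℝ :=
  ∫ r in Set.Ioc 0 x,
    r ^ (a - 1) * (1 - r) ^ (b - 1) * (Real.Gamma (a + b) / (Real.Gamma a * Real.Gamma b))

/-!
Write `a = pλ²`, `u = p/2`, `v = q/2`. The truncated density is the chi-squared density divided
by the constant `1 - Φ_G(a/2)`, and in the product of the chi-squared densities at `s - t` and `t`
the exponentials combine to `e^{-s/2}`. The substitution `t = s x` turns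
`∫_a^s (s - t)^{v-1} t^{u-1} dt` into `s^{u+v-1} ∫_{a/s}^1 x^{u-1} (1 - x)^{v-1} dx`, which is
`s^{u+v-1} B(u, v) (1 - Φ_B(a/s; u, v))`, and `B(u, v) = Γ(u) Γ(v) / Γ(u + v)` supplies the
normalisation of the chi-squared density with `p + q` degrees of freedom.
-/

lemma ofReal_rpow_mul_one_sub_rpow_eqOn (u v : ℝ) :
    Set.EqOn (fun x : ℝ => ((x ^ (u - 1) * (1 - x) ^ (v - 1) : ℝ) : ℂ))
      (fun x : ℝ => (x : ℂ) ^ ((u : ℂ) - 1) * (1 - (x : ℂ)) ^ ((v : ℂ) - 1)) (Set.uIcc 0 1) := by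
  intro x hx
  rw [Set.uIcc_of_le zero_le_one] at hx
  simp only [Complex.ofReal_mul, Complex.ofReal_cpow hx.1, Complex.ofReal_cpow (sub_nonneg.2 hx.2)]
  push_cast
  rfl

lemma intervalIntegrable_rpow_mul_one_sub_rpow {u v : ℝ} (hu : 0 < u) (hv : 0 < v) :
    IntervalIntegrable (fun x : ℝ => x ^ (u - 1) * (1 - x) ^ (v - 1)) volume 0 1 := by
  have hconv := Complex.betaIntegral_convergent (u := u) (v := v) (by simpa) (by simpa)
  rw [intervalIntegrable_iff] at hconv ⊢
  refine hconv.re.congr ((ae_restrict_iff' measurableSet_uIoc).mpr (ae_of_all _ fun x hx => ?_))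
  simp [← ofReal_rpow_mul_one_sub_rpow_eqOn u v (Set.uIoc_subset_uIcc hx)]

lemma integral_rpow_mul_one_sub_rpow {u v : ℝ} (hu : 0 < u) (hv : 0 < v) :
    ∫ x in (0 : ℝ)..1, x ^ (u - 1) * (1 - x) ^ (v - 1) = beta u v := by
  have hcomplex : Complex.betaIntegral u v
      = ((∫ x in (0 : ℝ)..1, x ^ (u - 1) * (1 - x) ^ (v - 1) : ℝ) : ℂ) := by
    rw [Complex.betaIntegral, ← intervalIntegral.integral_ofReal]
    exact intervalIntegral.integral_congr (ofReal_rpow_mul_one_sub_rpow_eqOn u v).symm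
  rw [beta_eq_betaIntegralReal u v hu hv, hcomplex, Complex.ofReal_re]

lemma one_sub_betaCDF {u v x : ℝ} (hu : 0 < u) (hv : 0 < v) (hx₀ : 0 ≤ x) (hx₁ : x ≤ 1) :
    1 - betaCDF u v x = (∫ r in x..1, r ^ (u - 1) * (1 - r) ^ (v - 1)) / beta u v := by
  have hint := intervalIntegrable_rpow_mul_one_sub_rpow hu hv
  have hsplit := intervalIntegral.integral_add_adjacent_intervals
    (hint.mono_set (Set.uIcc_subset_uIcc_left (Set.mem_uIcc.2 (Or.inl ⟨hx₀, hx₁⟩))))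
    (hint.mono_set (Set.uIcc_subset_uIcc_right (Set.mem_uIcc.2 (Or.inl ⟨hx₀, hx₁⟩))))
  rw [integral_rpow_mul_one_sub_rpow hu hv] at hsplit
  have hbeta : beta u v ≠ 0 := (beta_pos hu hv).ne'
  rw [betaCDF, integral_mul_const, ← intervalIntegral.integral_of_le hx₀,
    eq_sub_of_add_eq hsplit, ← inv_div, ← beta, ← div_eq_mul_inv, sub_div, div_self hbeta]
  ring

lemma integral_sub_rpow_mul_rpow {a s : ℝ} (ha : 0 ≤ a) (has : a ≤ s) (hs : 0 < s) (u v : ℝ) :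
    ∫ t in a..s, (s - t) ^ (v - 1) * t ^ (u - 1)
      = s ^ (u + v - 1) * ∫ x in (a / s)..1, x ^ (u - 1) * (1 - x) ^ (v - 1) := by
  have hscale := intervalIntegral.integral_comp_mul_left
    (fun t : ℝ => (s - t) ^ (v - 1) * t ^ (u - 1)) (a := a / s) (b := 1) hs.ne'
  rw [mul_one, mul_div_cancel₀ a hs.ne', smul_eq_mul] at hscale
  have hrescale : Set.EqOn (fun x : ℝ => (s - s * x) ^ (v - 1) * (s * x) ^ (u - 1))
      (fun x : ℝ => s ^ (v - 1) * s ^ (u - 1) * (x ^ (u - 1) * (1 - x) ^ (v - 1)))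
      (Set.uIcc (a / s) 1) := by
    intro x hx
    rw [Set.uIcc_of_le ((div_le_one hs).2 has)] at hx
    have hx₀ : 0 ≤ x := (div_nonneg ha hs.le).trans hx.1
    dsimp only
    rw [show s - s * x = s * (1 - x) by ring, mul_rpow hs.le (sub_nonneg.2 hx.2),
      mul_rpow hs.le hx₀]
    ring
  rw [intervalIntegral.integral_congr hrescale, intervalIntegral.integral_const_mul] at hscale
  rw [eq_inv_mul_iff_mul_eq₀ hs.ne'] at hscale
  rw [← hscale, show u + v - 1 = 1 + (v - 1) + (u - 1) by ring, rpow_add hs, rpow_add hs,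
    rpow_one]
  ring

lemma chiSqPDF_sub_mul_chiSqPDF (k m s t : ℝ) :
    chiSqPDF m (s - t) * chiSqPDF k t
      = exp (-s / 2) / (2 ^ ((k + m) / 2) * Gamma (k / 2) * Gamma (m / 2))
        * ((s - t) ^ (m / 2 - 1) * t ^ (k / 2 - 1)) := by
  have hexp : exp (-(s - t) / 2) * exp (-t / 2) = exp (-s / 2) := by
    rw [← exp_add]; ring_nf
  rw [add_div, rpow_add two_pos, chiSqPDF, chiSqPDF, ← hexp]
  ring

lemma integral_chiSqPDF_sub_mul_chiSqPDF {k m a s : ℝ} (hk : 0 < k) (hm : 0 < m) (ha : 0 ≤ a)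
    (has : a < s) :
    ∫ t in a..s, chiSqPDF m (s - t) * chiSqPDF k t
      = chiSqPDF (k + m) s * (1 - betaCDF (k / 2) (m / 2) (a / s)) := by
  have hs : 0 < s := ha.trans_lt has
  simp_rw [chiSqPDF_sub_mul_chiSqPDF k m s]
  rw [intervalIntegral.integral_const_mul, integral_sub_rpow_mul_rpow ha has.le hs,
    one_sub_betaCDF (by positivity) (by positivity) (div_nonneg ha hs.le)
      ((div_le_one hs).2 has.le)]
  have hΓ : Gamma ((k + m) / 2) ≠ 0 := (Gamma_pos_of_pos (by positivity)).ne'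
  rw [chiSqPDF, beta, ← add_div]
  field_simp

lemma truncChiSqPDF_eq_chiSqPDF_div (p lam z : ℝ) :
    truncChiSqPDF p lam z = chiSqPDF p z / (1 - gammaCDF (p / 2) (p * lam ^ 2 / 2)) := by
  simp only [truncChiSqPDF, chiSqPDF, div_eq_mul_inv, mul_inv]
  ring

theorem convolution_density_general (p q : ℕ) (hp : 0 < p) (hq : 0 < q) (lam : ℝ) :
    ∀ s : ℝ, (p : ℝ) * lam ^ 2 < s →
      (∫ t in Set.Icc ((p : ℝ) * lam ^ 2) s, chiSqPDF q (s - t) * truncChiSqPDF p lam t)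
        = chiSqPDF ((p : ℝ) + q) s
            * (1 - betaCDF ((p : ℝ) / 2) ((q : ℝ) / 2) ((p : ℝ) * lam ^ 2 / s))
            / (1 - gammaCDF ((p : ℝ) / 2) ((p : ℝ) * lam ^ 2 / 2)) := by
  intro s hs
  simp_rw [truncChiSqPDF_eq_chiSqPDF_div, ← mul_div_assoc]
  rw [integral_Icc_eq_integral_Ioc, ← intervalIntegral.integral_of_le hs.le,
    intervalIntegral.integral_div,
    integral_chiSqPDF_sub_mul_chiSqPDF (by positivity) (by positivity) (by positivity) hs]

theorem convolution_density (p q : ℕ) (hp : 0 < p) (hq : 0 < q) (lam : ℝ) (hlam : 0 < lam) :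
    ∀ s : ℝ, (p : ℝ) * lam ^ 2 < s →
      (∫ t in Set.Icc ((p : ℝ) * lam ^ 2) s, chiSqPDF q (s - t) * truncChiSqPDF p lam t)
        = chiSqPDF ((p : ℝ) + q) s
            * (1 - betaCDF ((p : ℝ) / 2) ((q : ℝ) / 2) ((p : ℝ) * lam ^ 2 / s))
            / (1 - gammaCDF ((p : ℝ) / 2) ((p : ℝ) * lam ^ 2 / 2)) :=
  convolution_density_general p q hp hq lam
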